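/- Let G be a finite group acting on a finite-dimensional algebra Λ, A = Λ*G, and X a finite-dimensional G-module. Then X ⊗_k^G A is isomorphic to A^{⊕ dim X} as an A-Λ-bimodule. Consequently, if Q is a projective A-module, then X ⊗_k^G Q is a projective A-module. -/

import Mathlib

/-! `X ⊗_k^G A ≅ A^{⊕ dim X}` as `A`-`Λ`-bimodules; consequently `X ⊗_k^G Q` is a
projective `A`-module whenever `Q` is. -/

open scoped TensorProduct

universe u

/-- An axiomatization of the skew group algebra `A = Λ * G`. -/
structure SkewGroupAlgebra (k : Type u) [Field k] (Λ : Type u) [Ring Λ] [Algebra k Λ]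
    (G : Type u) [Group G] [Fintype G] (σ : G →* (Λ ≃ₐ[k] Λ))
    (A : Type u) [Ring A] [Algebra k A] : Type u where
  ι : Λ →ₐ[k] A
  u : G →* Aˣ
  skew_comm : ∀ (g : G) (r : Λ), (u g : A) * ι r = ι (σ g r) * (u g : A)
  repr_unique : ∀ a : A, ∃! c : G → Λ, a = ∑ g : G, ι (c g) * (u g : A)

set_option linter.unusedSectionVars false

namespace SkewGroupAlgebra

variable {k Λ G A : Type u} [Field k] [Ring Λ] [Algebra k Λ]
  [Group G] [Fintype G] {σ : G →* (Λ ≃ₐ[k] Λ)} [Ring A] [Algebra k A]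
  (S : SkewGroupAlgebra k Λ G σ A)

noncomputable def coeff (a : A) : G → Λ := (S.repr_unique a).choose

lemma sum_coeff (a : A) : a = ∑ g : G, S.ι (S.coeff a g) * (S.u g : A) :=
  (S.repr_unique a).choose_spec.1

lemma coeff_unique {a : A} {c : G → Λ} (h : a = ∑ g : G, S.ι (c g) * (S.u g : A)) :
    c = S.coeff a :=
  (S.repr_unique a).choose_spec.2 c h

variable [DecidableEq G]

lemma unit_mul (g h : G) : (S.u g : A) * (S.u h : A) = (S.u (g * h) : A) := by
  rw [← Units.val_mul, ← map_mul]

lemma term_eq (r : Λ) (g h : G) (c : Λ) :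
    S.ι r * (S.u g : A) * (S.ι c * (S.u h : A)) =
      S.ι (r * σ g c) * (S.u (g * h) : A) := by
  rw [mul_assoc (S.ι r), ← mul_assoc ((S.u g : A)), S.skew_comm,
    mul_assoc (S.ι (σ g c)), S.unit_mul, ← mul_assoc, ← map_mul]

noncomputable def comp (h : G) : A →ₗ[k] A where
  toFun a := S.ι (S.coeff a h) * (S.u h : A)
  map_add' a b := by
    have hc : (fun g => S.coeff a g + S.coeff b g) = S.coeff (a + b) := by
      apply S.coeff_unique
      simp only [map_add, add_mul, Finset.sum_add_distrib]
      rw [← S.sum_coeff a, ← S.sum_coeff b]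
    show S.ι (S.coeff (a + b) h) * (S.u h : A) =
      S.ι (S.coeff a h) * (S.u h : A) + S.ι (S.coeff b h) * (S.u h : A)
    rw [← hc]
    simp [map_add, add_mul]
  map_smul' m a := by
    have hc : (fun g => m • S.coeff a g) = S.coeff (m • a) := by
      apply S.coeff_unique
      simp only [map_smul, smul_mul_assoc, ← Finset.smul_sum]
      rw [← S.sum_coeff a]
    show S.ι (S.coeff (m • a) h) * (S.u h : A) = m • (S.ι (S.coeff a h) * (S.u h : A))
    rw [← hc]
    simp [map_smul, smul_mul_assoc]

lemma comp_apply (h : G) (a : A) : S.comp h a = S.ι (S.coeff a h) * (S.u h : A) := rfl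

lemma sum_comp (a : A) : ∑ h : G, S.comp (k := k) h a = a := (S.sum_coeff a).symm

lemma coeff_single (r : Λ) (g : G) :
    S.coeff (S.ι r * (S.u g : A)) = fun h => if h = g then r else 0 := by
  refine (S.coeff_unique ?_).symm
  have : ∀ h : G, S.ι (if h = g then r else 0) * (S.u h : A) =
      if h = g then S.ι r * (S.u h : A) else 0 := by
    intro h; split_ifs <;> simp
  simp only [this]
  rw [Finset.sum_ite_eq' Finset.univ g (fun h => S.ι r * (S.u h : A))]
  simp

lemma comp_single (h : G) (r : Λ) (g : G) :
    S.comp (k := k) h (S.ι r * (S.u g : A)) = if h = g then S.ι r * (S.u g : A) else 0 := by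
  rw [comp_apply, coeff_single]
  by_cases hh : h = g <;> simp [hh]

lemma comp_comp (g' h : G) (a : A) :
    S.comp (k := k) g' (S.comp (k := k) h a) = if g' = h then S.comp (k := k) h a else 0 := by
  rw [comp_apply S h a]
  exact S.comp_single g' _ h

lemma comp_mul_left (h : G) (r : Λ) (g : G) (m : A) :
    S.comp (k := k) h (S.ι r * (S.u g : A) * m) =
      S.ι r * (S.u g : A) * S.comp (k := k) (g⁻¹ * h) m := by
  have hc : S.coeff (S.ι r * (S.u g : A) * m) =
      fun h => r * σ g (S.coeff m (g⁻¹ * h)) := by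
    refine (S.coeff_unique ?_).symm
    conv_lhs => rw [S.sum_coeff m]
    rw [Finset.mul_sum]
    rw [← Equiv.sum_comp (Equiv.mulLeft g)
      (fun h => S.ι (r * σ g (S.coeff m (g⁻¹ * h))) * (S.u h : A))]
    refine Finset.sum_congr rfl fun h' _ => ?_
    simp only [Equiv.coe_mulLeft, inv_mul_cancel_left]
    exact S.term_eq r g h' (S.coeff m h')
  rw [comp_apply, comp_apply, hc]
  simp only
  rw [S.term_eq r g (g⁻¹ * h) (S.coeff m (g⁻¹ * h)), mul_inv_cancel_left]

lemma comp_mul_right (h : G) (m : A) (r : Λ) :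
    S.comp (k := k) h (m * S.ι r) = S.comp (k := k) h m * S.ι r := by
  have key : ∀ (c : Λ) (h : G), S.ι c * (S.u h : A) * S.ι r =
      S.ι (c * σ h r) * (S.u h : A) := by
    intro c h'
    rw [mul_assoc, S.skew_comm, ← mul_assoc, ← map_mul]
  have hc : S.coeff (m * S.ι r) = fun h => S.coeff m h * σ h r := by
    refine (S.coeff_unique ?_).symm
    conv_lhs => rw [S.sum_coeff m]
    rw [Finset.sum_mul]
    exact Finset.sum_congr rfl fun h' _ => key _ h'
  rw [comp_apply, comp_apply, hc, key]

end SkewGroupAlgebra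

namespace SkewGroupAlgebra

variable {k Λ G A : Type u} [Field k] [Ring Λ] [Algebra k Λ]
  [Group G] [Fintype G] {σ : G →* (Λ ≃ₐ[k] Λ)} [Ring A] [Algebra k A]
  (S : SkewGroupAlgebra k Λ G σ A)
  {X : Type u} [AddCommGroup X] [Module k X] (ρ : Representation k G X)
  {ι' : Type*} [Fintype ι'] [DecidableEq ι'] (b : Module.Basis ι' k X) [DecidableEq G]

lemma rho_inv_self (h : G) (y : X) : ρ h⁻¹ (ρ h y) = y := by
  rw [← Module.End.mul_apply, ← map_mul, inv_mul_cancel, map_one, Module.End.one_apply]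

lemma rho_self_inv (h : G) (y : X) : ρ h (ρ h⁻¹ y) = y := by
  rw [← Module.End.mul_apply, ← map_mul, mul_inv_cancel, map_one, Module.End.one_apply]

/-- The bilinear map underlying `X ⊗ A → A^{ι'}`. -/
noncomputable def Bmap : X →ₗ[k] A →ₗ[k] (ι' → A) :=
  LinearMap.mk₂ k (fun x m i => ∑ h : G, b.repr (ρ h⁻¹ x) i • S.comp (k := k) h m)
    (fun x x' m => by
      funext i
      simp [map_add, add_smul, Finset.sum_add_distrib])
    (fun c x m => by
      funext i
      simp only [map_smul, Finsupp.smul_apply, Pi.smul_apply, Finset.smul_sum, smul_smul,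
        smul_eq_mul])
    (fun x m m' => by
      funext i
      simp [map_add, smul_add, Finset.sum_add_distrib])
    (fun c x m => by
      funext i
      simp only [map_smul, Pi.smul_apply, Finset.smul_sum, smul_comm c])

lemma Bmap_apply (x : X) (m : A) (i : ι') :
    S.Bmap ρ b x m i = ∑ h : G, b.repr (ρ h⁻¹ x) i • S.comp (k := k) h m := rfl

lemma B_twist (x : X) (m : A) (r : Λ) (g : G) (i : ι') :
    S.Bmap ρ b (ρ g x) (S.ι r * (S.u g : A) * m) i =
      S.ι r * (S.u g : A) * S.Bmap ρ b x m i := by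
  have hρ : ∀ h : G, ρ h⁻¹ (ρ g x) = ρ (h⁻¹ * g) x := by
    intro h; rw [map_mul, Module.End.mul_apply]
  rw [Bmap_apply, Bmap_apply, Finset.mul_sum]
  refine Fintype.sum_equiv (Equiv.mulLeft g⁻¹) _ _ fun h => ?_
  simp only [Equiv.coe_mulLeft, S.comp_mul_left, hρ, mul_inv_rev, inv_inv,
    Algebra.mul_smul_comm]

lemma B_right (x : X) (m : A) (r : Λ) (i : ι') :
    S.Bmap ρ b x (m * S.ι r) i = S.Bmap ρ b x m i * S.ι r := by
  rw [Bmap_apply, Bmap_apply, Finset.sum_mul]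
  exact Finset.sum_congr rfl fun h _ => by rw [S.comp_mul_right, smul_mul_assoc]

lemma comp_B (h' : G) (x : X) (m : A) (i : ι') :
    S.comp (k := k) h' (S.Bmap ρ b x m i) = b.repr (ρ h'⁻¹ x) i • S.comp (k := k) h' m := by
  rw [Bmap_apply, map_sum]
  simp only [map_smul, S.comp_comp, smul_ite, smul_zero]
  rw [Finset.sum_ite_eq Finset.univ h' (fun h => b.repr (ρ h⁻¹ x) i • S.comp (k := k) h m)]
  simp

/-- The inverse map `A^{ι'} → X ⊗ A`. -/
noncomputable def psi0 : (ι' → A) →ₗ[k] X ⊗[k] A :=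
  ∑ i : ι', ∑ h : G,
    (TensorProduct.mk k X A (ρ h (b i))).comp ((S.comp (k := k) h).comp (LinearMap.proj i))

lemma psi0_apply (v : ι' → A) :
    S.psi0 ρ b v = ∑ i : ι', ∑ h : G, ρ h (b i) ⊗ₜ[k] S.comp (k := k) h (v i) := by
  simp only [psi0, LinearMap.coe_sum, Finset.sum_apply, LinearMap.comp_apply,
    TensorProduct.mk_apply, LinearMap.proj_apply]

lemma B_psi (v : ι' → A) (j : ι') :
    TensorProduct.lift (S.Bmap ρ b) (S.psi0 ρ b v) j = v j := by
  rw [psi0_apply, map_sum, Finset.sum_apply]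
  have : ∀ i : ι', (TensorProduct.lift (S.Bmap ρ b)
      (∑ h : G, ρ h (b i) ⊗ₜ[k] S.comp (k := k) h (v i))) j =
      if i = j then v i else 0 := by
    intro i
    rw [map_sum, Finset.sum_apply]
    have h1 : ∀ h : G,
        TensorProduct.lift (S.Bmap ρ b) (ρ h (b i) ⊗ₜ[k] S.comp (k := k) h (v i)) j =
        b.repr (b i) j • S.comp (k := k) h (v i) := by
      intro h
      rw [TensorProduct.lift.tmul, Bmap_apply]
      have h2 : ∀ g : G, b.repr (ρ g⁻¹ (ρ h (b i))) j •
          S.comp (k := k) g (S.comp (k := k) h (v i)) =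
          if g = h then b.repr (b i) j • S.comp (k := k) h (v i) else 0 := by
        intro g
        rw [S.comp_comp]
        by_cases hg : g = h
        · subst hg; rw [if_pos rfl, if_pos rfl, rho_inv_self]
        · simp [hg]
      simp only [h2]
      rw [Finset.sum_ite_eq' Finset.univ h
        (fun _ => b.repr (b i) j • S.comp (k := k) h (v i))]
      simp
    simp only [h1]
    rw [← Finset.smul_sum, S.sum_comp, b.repr_self, Finsupp.single_apply]
    by_cases hij : i = j <;> simp [hij]
  simp only [this]
  rw [Finset.sum_ite_eq' Finset.univ j v]
  simp

lemma psi_B (z : X ⊗[k] A) : S.psi0 ρ b (TensorProduct.lift (S.Bmap ρ b) z) = z := by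
  have key : (S.psi0 ρ b).comp (TensorProduct.lift (S.Bmap ρ b)) = LinearMap.id := by
    apply TensorProduct.ext'
    intro x m
    simp only [LinearMap.comp_apply, LinearMap.id_apply, TensorProduct.lift.tmul]
    rw [psi0_apply]
    have h1 : ∀ (i : ι') (h : G),
        ρ h (b i) ⊗ₜ[k] S.comp (k := k) h (S.Bmap ρ b x m i) =
        (b.repr (ρ h⁻¹ x) i • ρ h (b i)) ⊗ₜ[k] S.comp (k := k) h m := by
      intro i h
      rw [S.comp_B, TensorProduct.tmul_smul, TensorProduct.smul_tmul']
    simp only [h1]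
    rw [Finset.sum_comm]
    have h2 : ∀ h : G,
        (∑ i : ι', (b.repr (ρ h⁻¹ x) i • ρ h (b i)) ⊗ₜ[k] S.comp (k := k) h m) =
        x ⊗ₜ[k] S.comp (k := k) h m := by
      intro h
      rw [← TensorProduct.sum_tmul]
      congr 1
      have : ∀ i : ι', b.repr (ρ h⁻¹ x) i • ρ h (b i) = ρ h (b.repr (ρ h⁻¹ x) i • b i) := by
        intro i; rw [map_smul]
      simp only [this]
      rw [← map_sum, b.sum_repr, rho_self_inv]
    simp only [h2]
    rw [← TensorProduct.tmul_sum, S.sum_comp]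
  exact DFunLike.congr_fun key z


variable {Q : Type u} [AddCommGroup Q] [Module A Q] [Module k Q] [IsScalarTower k A Q]

/-- `a ↦ a • q'` as a `k`-linear map. -/
def smulQ (q' : Q) : A →ₗ[k] Q where
  toFun a := a • q'
  map_add' a a' := add_smul a a' q'
  map_smul' c a := smul_assoc c a q'

@[simp] lemma smulQ_apply (q' : Q) (a : A) : smulQ (k := k) q' a = a • q' := rfl

/-- The map `X ⊗ Q → (Q →₀ A^{ι'})` induced by a section `sQ` of the free cover of `Q`. -/
noncomputable def jmap (sQ : Q →ₗ[A] (Q →₀ A)) : X ⊗[k] Q →ₗ[k] (Q →₀ (ι' → A)) :=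
  TensorProduct.lift <| LinearMap.mk₂ k
    (fun x q => Finsupp.mapRange.linearMap (S.Bmap ρ b x) (sQ q))
    (fun x x' q => by
      ext q'
      simp [Finsupp.mapRange_apply, map_add])
    (fun c x q => by
      ext q'
      simp [Finsupp.mapRange_apply, map_smul])
    (fun x q q' => by simp [map_add])
    (fun c x q => by
      have hsq : sQ (c • q) = c • sQ q := by
        rw [← algebraMap_smul A c q, map_smul, algebraMap_smul]
      simp [hsq, map_smul])

lemma jmap_tmul (sQ : Q →ₗ[A] (Q →₀ A)) (x : X) (q : Q) (q' : Q) :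
    S.jmap ρ b sQ (x ⊗ₜ[k] q) q' = S.Bmap ρ b x (sQ q q') := by
  simp [jmap, Finsupp.mapRange_apply]

/-- The map `(Q →₀ A^{ι'}) → X ⊗ Q`. -/
noncomputable def pmap : (Q →₀ (ι' → A)) →ₗ[k] X ⊗[k] Q :=
  Finsupp.lsum k fun q' => ∑ i : ι', ∑ h : G,
    (TensorProduct.mk k X Q (ρ h (b i))).comp
      ((smulQ (k := k) q').comp ((S.comp (k := k) h).comp (LinearMap.proj i)))

lemma pmap_single (q' : Q) (v : ι' → A) :
    S.pmap ρ b (Finsupp.single q' v) =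
      ∑ i : ι', ∑ h : G, ρ h (b i) ⊗ₜ[k] (S.comp (k := k) h (v i) • q') := by
  rw [pmap, Finsupp.lsum_single]
  simp only [LinearMap.coe_sum, Finset.sum_apply, LinearMap.comp_apply,
    TensorProduct.mk_apply, LinearMap.proj_apply, smulQ_apply]

lemma Lq_B (q' : Q) (x : X) (m : A) :
    (∑ i : ι', ∑ h : G, ρ h (b i) ⊗ₜ[k] (S.comp (k := k) h (S.Bmap ρ b x m i) • q')) =
      x ⊗ₜ[k] (m • q') := by
  have h1 : ∀ (i : ι') (h : G),
      ρ h (b i) ⊗ₜ[k] (S.comp (k := k) h (S.Bmap ρ b x m i) • q') =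
      (b.repr (ρ h⁻¹ x) i • ρ h (b i)) ⊗ₜ[k] (S.comp (k := k) h m • q') := by
    intro i h
    rw [S.comp_B, smul_assoc, TensorProduct.tmul_smul, TensorProduct.smul_tmul']
  simp only [h1]
  rw [Finset.sum_comm]
  have h2 : ∀ h : G,
      (∑ i : ι', (b.repr (ρ h⁻¹ x) i • ρ h (b i)) ⊗ₜ[k] (S.comp (k := k) h m • q')) =
      x ⊗ₜ[k] (S.comp (k := k) h m • q') := by
    intro h
    rw [← TensorProduct.sum_tmul]
    congr 1
    have : ∀ i : ι', b.repr (ρ h⁻¹ x) i • ρ h (b i) = ρ h (b.repr (ρ h⁻¹ x) i • b i) := by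
      intro i; rw [map_smul]
    simp only [this]
    rw [← map_sum, b.sum_repr, rho_self_inv]
  simp only [h2]
  rw [← TensorProduct.tmul_sum, ← Finset.sum_smul, S.sum_comp]

lemma pmap_jmap (sQ : Q →ₗ[A] (Q →₀ A)) (x : X) (q : Q) :
    S.pmap ρ b (S.jmap ρ b sQ (x ⊗ₜ[k] q)) =
      x ⊗ₜ[k] (Finsupp.linearCombination A id (sQ q)) := by
  have hj : S.jmap ρ b sQ (x ⊗ₜ[k] q) =
      Finsupp.mapRange.linearMap (S.Bmap ρ b x) (sQ q) := by
    simp [jmap]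
  rw [hj]
  rw [pmap, Finsupp.lsum_apply]
  rw [Finsupp.mapRange.linearMap_apply]
  rw [Finsupp.sum_mapRange_index (fun q' => by simp)]
  have term : ∀ (q' : Q) (m : A),
      (∑ i : ι', ∑ h : G, (TensorProduct.mk k X Q (ρ h (b i))).comp
        ((smulQ (k := k) q').comp ((S.comp (k := k) h).comp (LinearMap.proj i))))
        (S.Bmap ρ b x m) = x ⊗ₜ[k] (m • q') := by
    intro q' m
    simp only [LinearMap.coe_sum, Finset.sum_apply, LinearMap.comp_apply,
      TensorProduct.mk_apply, LinearMap.proj_apply, smulQ_apply]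
    exact S.Lq_B ρ b q' x m
  rw [Finsupp.sum_congr (g2 := fun q' m => x ⊗ₜ[k] (m • q')) (fun q' _ => term q' _)]
  rw [Finsupp.linearCombination_apply, Finsupp.sum, Finsupp.sum, TensorProduct.tmul_sum]
  rfl

end SkewGroupAlgebra

/-- `T` is (a realization of) the `A`-module `X ⊗_k^G N`. -/
structure IsGTensor {k Λ G A : Type u} [Field k] [Ring Λ] [Algebra k Λ]
    [Group G] [Fintype G] {σ : G →* (Λ ≃ₐ[k] Λ)} [Ring A] [Algebra k A]
    (S : SkewGroupAlgebra k Λ G σ A)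
    (X : Type u) [AddCommGroup X] [Module k X] (ρ : Representation k G X)
    (N : Type u) [AddCommGroup N] [Module A N] [Module k N] [IsScalarTower k A N]
    (T : Type u) [AddCommGroup T] [Module A T] : Type u where
  e : X ⊗[k] N ≃+ T
  smul_e : ∀ (r : Λ) (g : G) (x : X) (n : N),
    (S.ι r * (S.u g : A)) • e (x ⊗ₜ[k] n) = e (ρ g x ⊗ₜ[k] ((S.ι r * (S.u g : A)) • n))

open SkewGroupAlgebra in
/-- `X ⊗_k^G A` is isomorphic to `A^{⊕ dim X}` as an `A`-`Λ`-bimodule (left `A`-action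
as given, right `Λ`-action through right multiplication on the `A`-factor); consequently,
for a projective `A`-module `Q`, the module `X ⊗_k^G Q` is projective. -/
theorem gTensor_algebra_iso_pow_and_projective
    (k Λ G A : Type u) [Field k] [Ring Λ] [Algebra k Λ] [FiniteDimensional k Λ]
    [Group G] [Fintype G] (σ : G →* (Λ ≃ₐ[k] Λ)) [Ring A] [Algebra k A]
    (S : SkewGroupAlgebra k Λ G σ A)
    (X : Type u) [AddCommGroup X] [Module k X] [FiniteDimensional k X]
    (ρ : Representation k G X)
    (T : Type u) [AddCommGroup T] [Module A T]
    (hT : IsGTensor S X ρ A T) :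
    (∃ φ : T ≃+ (Fin (Module.finrank k X) → A),
      (∀ (a : A) (t : T) (i : Fin (Module.finrank k X)), φ (a • t) i = a * φ t i) ∧
      (∀ (x : X) (a : A) (r : Λ) (i : Fin (Module.finrank k X)),
        φ (hT.e (x ⊗ₜ[k] (a * S.ι r))) i = φ (hT.e (x ⊗ₜ[k] a)) i * S.ι r)) ∧
    (∀ (Q TQ : Type u) [AddCommGroup Q] [Module A Q] [Module k Q] [IsScalarTower k A Q]
      [AddCommGroup TQ] [Module A TQ],
      IsGTensor S X ρ Q TQ → Module.Projective A Q → Module.Projective A TQ) := by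
  classical
  let b : Module.Basis (Fin (Module.finrank k X)) k X := Module.finBasis k X
  refine ⟨?_, ?_⟩
  · -- Part 1 : the bimodule isomorphism
    let eq1 : X ⊗[k] A ≃+ (Fin (Module.finrank k X) → A) :=
      { toFun := TensorProduct.lift (S.Bmap ρ b)
        invFun := S.psi0 ρ b
        left_inv := fun z => S.psi_B ρ b z
        right_inv := fun v => funext fun jj => S.B_psi ρ b v jj
        map_add' := fun z z' => (TensorProduct.lift (S.Bmap ρ b)).map_add z z' }
    have hφe : ∀ z : X ⊗[k] A, (hT.e.symm.trans eq1) (hT.e z) =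
        TensorProduct.lift (S.Bmap ρ b) z := by
      intro z
      rw [AddEquiv.trans_apply, AddEquiv.symm_apply_apply]
      rfl
    refine ⟨hT.e.symm.trans eq1, ?_, ?_⟩
    · have Paux : ∀ (r : Λ) (g : G) (z : X ⊗[k] A) (i : Fin (Module.finrank k X)),
          (hT.e.symm.trans eq1) ((S.ι r * (S.u g : A)) • hT.e z) i =
            (S.ι r * (S.u g : A)) * (hT.e.symm.trans eq1) (hT.e z) i := by
        intro r g z i
        induction z using TensorProduct.induction_on with
        | zero => simp
        | tmul x n =>
          rw [hT.smul_e, hφe, hφe, TensorProduct.lift.tmul, TensorProduct.lift.tmul,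
            smul_eq_mul]
          exact S.B_twist ρ b x n r g i
        | add z₁ z₂ ih₁ ih₂ =>
          rw [map_add, smul_add]
          simp only [map_add, Pi.add_apply, mul_add, ih₁, ih₂]
      intro a t i
      obtain ⟨z, rfl⟩ : ∃ z, t = hT.e z := ⟨hT.e.symm t, (hT.e.apply_symm_apply t).symm⟩
      conv_lhs => rw [S.sum_coeff a]
      conv_rhs => rw [S.sum_coeff a]
      rw [Finset.sum_smul, map_sum, Finset.sum_apply, Finset.sum_mul]
      exact Finset.sum_congr rfl fun g _ => Paux _ g z i
    · intro x a r i
      rw [hφe, hφe, TensorProduct.lift.tmul, TensorProduct.lift.tmul]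
      exact S.B_right ρ b x a r i
  · -- Part 2 : projectivity
    intro Q TQ _ _ _ _ _ _ hTQ hQ
    obtain ⟨sQ, hs⟩ := Module.projective_def.mp hQ
    have key_j : ∀ (a : A) (z : X ⊗[k] Q),
        S.jmap ρ b sQ (hTQ.e.symm (a • hTQ.e z)) = a • S.jmap ρ b sQ z := by
      have single_j : ∀ (r : Λ) (g : G) (z : X ⊗[k] Q),
          S.jmap ρ b sQ (hTQ.e.symm ((S.ι r * (S.u g : A)) • hTQ.e z)) =
            (S.ι r * (S.u g : A)) • S.jmap ρ b sQ z := by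
        intro r g z
        induction z using TensorProduct.induction_on with
        | zero => simp
        | tmul x q =>
          rw [hTQ.smul_e, AddEquiv.symm_apply_apply]
          ext q' i
          simp only [S.jmap_tmul, map_smul, Finsupp.smul_apply, smul_eq_mul,
            Pi.smul_apply]
          exact S.B_twist ρ b x (sQ q q') r g i
        | add z₁ z₂ ih₁ ih₂ =>
          rw [map_add, smul_add]
          simp only [map_add, smul_add, ih₁, ih₂]
      intro a z
      conv_lhs => rw [S.sum_coeff a]
      conv_rhs => rw [S.sum_coeff a]
      rw [Finset.sum_smul, map_sum, map_sum, Finset.sum_smul]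
      exact Finset.sum_congr rfl fun g _ => single_j _ g z
    have key_p : ∀ (a : A) (f : Q →₀ (Fin (Module.finrank k X) → A)),
        hTQ.e (S.pmap ρ b (a • f)) = a • hTQ.e (S.pmap ρ b f) := by
      have single_p : ∀ (r : Λ) (g : G) (q' : Q) (v : Fin (Module.finrank k X) → A),
          hTQ.e (S.pmap ρ b ((S.ι r * (S.u g : A)) • Finsupp.single q' v)) =
            (S.ι r * (S.u g : A)) • hTQ.e (S.pmap ρ b (Finsupp.single q' v)) := by
        intro r g q' v
        rw [Finsupp.smul_single, S.pmap_single, S.pmap_single]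
        have rhs_eq : (S.ι r * (S.u g : A)) • hTQ.e (∑ i : Fin (Module.finrank k X),
              ∑ h : G, ρ h (b i) ⊗ₜ[k] (S.comp (k := k) h (v i) • q')) =
            ∑ i : Fin (Module.finrank k X), ∑ h : G,
              hTQ.e (ρ g (ρ h (b i)) ⊗ₜ[k]
                ((S.ι r * (S.u g : A)) • (S.comp (k := k) h (v i) • q'))) := by
          rw [map_sum, Finset.smul_sum]
          refine Finset.sum_congr rfl fun i _ => ?_
          rw [map_sum, Finset.smul_sum]
          exact Finset.sum_congr rfl fun h _ => hTQ.smul_e r g _ _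
        rw [rhs_eq, map_sum]
        refine Finset.sum_congr rfl fun i _ => ?_
        rw [map_sum]
        refine Fintype.sum_equiv (Equiv.mulLeft g⁻¹) _ _ fun h => ?_
        simp only [Equiv.coe_mulLeft]
        have hx : ρ g (ρ (g⁻¹ * h) (b i)) = ρ h (b i) := by
          rw [← Module.End.mul_apply, ← map_mul, mul_inv_cancel_left]
        rw [hx]
        congr 1
        rw [Pi.smul_apply, smul_eq_mul, S.comp_mul_left, mul_smul]
      have unit_p : ∀ (r : Λ) (g : G) (f : Q →₀ (Fin (Module.finrank k X) → A)),
          hTQ.e (S.pmap ρ b ((S.ι r * (S.u g : A)) • f)) =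
            (S.ι r * (S.u g : A)) • hTQ.e (S.pmap ρ b f) := by
        intro r g f
        induction f using Finsupp.induction with
        | zero => simp
        | single_add q' v f hq hv ih =>
          rw [smul_add]
          simp only [map_add, smul_add]
          rw [single_p, ih]
      intro a f
      conv_lhs => rw [S.sum_coeff a]
      conv_rhs => rw [S.sum_coeff a]
      rw [Finset.sum_smul, map_sum, map_sum, Finset.sum_smul]
      exact Finset.sum_congr rfl fun g _ => unit_p _ g f
    refine Module.Projective.of_split
      (M := Q →₀ (Fin (Module.finrank k X) → A))
      { toFun := fun t => S.jmap ρ b sQ (hTQ.e.symm t)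
        map_add' := fun t t' => by simp only [map_add]
        map_smul' := fun a t => by
          simp only [RingHom.id_apply]
          conv_lhs => rw [show t = hTQ.e (hTQ.e.symm t) from (hTQ.e.apply_symm_apply t).symm]
          rw [key_j a (hTQ.e.symm t)] }
      { toFun := fun f => hTQ.e (S.pmap ρ b f)
        map_add' := fun f f' => by simp only [map_add]
        map_smul' := fun a f => by
          simp only [RingHom.id_apply]
          exact key_p a f }
      ?_
    apply LinearMap.ext
    intro t
    simp only [LinearMap.comp_apply, LinearMap.coe_mk, AddHom.coe_mk, LinearMap.id_apply]
    obtain ⟨z, rfl⟩ : ∃ z, t = hTQ.e z := ⟨hTQ.e.symm t, (hTQ.e.apply_symm_apply t).symm⟩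
    rw [AddEquiv.symm_apply_apply]
    induction z using TensorProduct.induction_on with
    | zero => simp
    | add z₁ z₂ ih₁ ih₂ =>
      simp only [map_add, ih₁, ih₂]
    | tmul x q =>
      rw [S.pmap_jmap, hs q]
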